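/- Let Ω be a graded differential algebra carrying an operation of a finite-dimensional Lie algebra g, and let h ↦ L_h be the canonical extension of L to U(g). Then for every X ∈ g and every h ∈ U(g), one has i_X L_h = Σ_j L_{h_j^{(1)}} i_{ad(h_j^{(2)})X}, where Δh = Σ_j h_j^{(1)} ⊗ h_j^{(2)} and ad is the right adjoint action of U(g) on itself; note that ad(h)X ∈ g for X ∈ g, so the right-hand side is well defined. -/

import Mathlib

/-!
The identity is multiplicative in `h`: if it holds for `k` and every `X`, then multiplying a
term `L_x i_{ad(y) X}` on the right by `L_k` and using `ad(y) X ∈ g` gives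
`Σ L_{x k⁽¹⁾} i_{ad(k⁽²⁾) ad(y) X} = Σ L_{x k⁽¹⁾} i_{ad(y k⁽²⁾) X}`, which is the term
for `(x ⊗ y) Δ k`; since `Δ` is multiplicative this propagates the identity from `h` and `k`
to `h k`. On the generators `h = Y ∈ g` it is the Cartan relation `[i_X, L_Y] = i_{[X,Y]}`.
The membership `ad(h) X ∈ g` follows the same way from `ad(Y) X = [X, Y]` and
`ad(h k) = ad(k) ∘ ad(h)`.
-/

open scoped TensorProduct DirectSum

attribute [local instance 100] LieRing.ofAssociativeRing

/-- A differential making an ℕ-graded algebra into a graded differential algebra: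
`d` is homogeneous of degree `+1`, squares to zero, and is an antiderivation
(graded Leibniz rule). -/
structure IsGDA (K : Type) [Field K] (Ω : Type) [Ring Ω] [Algebra K Ω]
    (𝒜 : ℕ → Submodule K Ω) (d : Ω →ₗ[K] Ω) : Prop where
  d_mem : ∀ (n : ℕ), ∀ a ∈ 𝒜 n, d a ∈ 𝒜 (n + 1)
  d_sq : ∀ a : Ω, d (d a) = 0
  leibniz : ∀ (n : ℕ) (a b : Ω), a ∈ 𝒜 n →
    d (a * b) = d a * b + ((-1 : K) ^ n) • (a * d b)

/-- An operation (in the sense of H. Cartan) of a Lie algebra `g` in a graded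
differential algebra `Ω`: a linear family of degree `-1` antiderivations `i X`
satisfying the Cartan relation `[i X, L Y] = i ⁅X,Y⁆`, where
`L Y = i Y ∘ d + d ∘ i Y`. -/
structure IsLieOperation (K : Type) [Field K] (g : Type) [LieRing g] [LieAlgebra K g]
    (Ω : Type) [Ring Ω] [Algebra K Ω] (𝒜 : ℕ → Submodule K Ω) (d : Ω →ₗ[K] Ω)
    (i : g →ₗ[K] Module.End K Ω) : Prop where
  i_mem : ∀ (X : g) (n : ℕ), ∀ a ∈ 𝒜 (n + 1), i X a ∈ 𝒜 n
  i_deg0 : ∀ (X : g), ∀ a ∈ 𝒜 0, i X a = 0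
  antider : ∀ (X : g) (n : ℕ) (a b : Ω), a ∈ 𝒜 n →
    i X (a * b) = i X a * b + ((-1 : K) ^ n) • (a * i X b)
  cartan : ∀ X Y : g,
    i X * ((d : Module.End K Ω) * i Y + i Y * (d : Module.End K Ω))
      - ((d : Module.End K Ω) * i Y + i Y * (d : Module.End K Ω)) * i X = i ⁅X, Y⁆

section UEAHopf

variable (K : Type) [Field K] (g : Type) [LieRing g] [LieAlgebra K g]

/-- The generator `X ↦ X ⊗ 1 + 1 ⊗ X` of the coproduct of `U(g)`, as a morphism of Lie
algebras. -/
noncomputable def comulUgen : g →ₗ⁅K⁆ (UniversalEnvelopingAlgebra K g ⊗[K] UniversalEnvelopingAlgebra K g) where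
  toFun X := (UniversalEnvelopingAlgebra.ι K X) ⊗ₜ[K] 1 + 1 ⊗ₜ[K] (UniversalEnvelopingAlgebra.ι K X)
  map_add' := by intro X Y; simp [TensorProduct.add_tmul, TensorProduct.tmul_add]; abel
  map_smul' := by intro c X; simp [TensorProduct.smul_tmul', TensorProduct.tmul_smul]
  map_lie' := by
    intro X Y
    simp only [Ring.lie_def, LieHom.coe_toLinearMap, LieHom.map_lie]
    simp [Ring.lie_def, Algebra.TensorProduct.tmul_mul_tmul, mul_add, add_mul,
      TensorProduct.sub_tmul, TensorProduct.tmul_sub]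
    abel

/-- The coproduct of the Hopf algebra `U(g)`, determined by
`Δ X = X ⊗ 1 + 1 ⊗ X` for `X ∈ g`. -/
noncomputable def comulU : UniversalEnvelopingAlgebra K g →ₐ[K]
    (UniversalEnvelopingAlgebra K g ⊗[K] UniversalEnvelopingAlgebra K g) :=
  UniversalEnvelopingAlgebra.lift K (comulUgen K g)

/-- The counit of the Hopf algebra `U(g)`, determined by `ε X = 0` for `X ∈ g`. -/
noncomputable def counitU : UniversalEnvelopingAlgebra K g →ₐ[K] K :=
  UniversalEnvelopingAlgebra.lift K (0 : g →ₗ⁅K⁆ K)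

/-- The generator `X ↦ -X` of the antipode of `U(g)` (with values in the opposite
algebra), as a morphism of Lie algebras. -/
noncomputable def antiUgen : g →ₗ⁅K⁆ (UniversalEnvelopingAlgebra K g)ᵐᵒᵖ where
  toFun X := -MulOpposite.op (UniversalEnvelopingAlgebra.ι K X)
  map_add' := by intro X Y; simp; abel
  map_smul' := by intro c X; simp
  map_lie' := by
    intro X Y
    simp only [Ring.lie_def, LieHom.map_lie]
    rw [← MulOpposite.op_neg, neg_sub]
    simp [MulOpposite.op_sub, MulOpposite.op_mul]

/-- The antipode of the Hopf algebra `U(g)`, determined by `S X = -X` for `X ∈ g`. -/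
noncomputable def antiU : UniversalEnvelopingAlgebra K g →ₗ[K] UniversalEnvelopingAlgebra K g :=
  (MulOpposite.opLinearEquiv K).symm.toLinearMap ∘ₗ
    (UniversalEnvelopingAlgebra.lift K (antiUgen K g)).toLinearMap

end UEAHopf

section HopfHelpers

variable (K : Type) [Field K] (H : Type) [Ring H] [Algebra K H]

/-- The right adjoint action associated to a coproduct `comul` and an antipode `anti`:
`adAct comul anti g` is the linear map `h ↦ ad(h)g = Σⱼ S(h⁽¹⁾ⱼ) g h⁽²⁾ⱼ`. -/
noncomputable def adAct (comul : H →ₗ[K] H ⊗[K] H) (anti : H →ₗ[K] H) (g : H) :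
    H →ₗ[K] H :=
  TensorProduct.lift (LinearMap.mk₂ K (fun x y => anti x * g * y)
    (fun x x' y => by simp [map_add, add_mul])
    (fun c x y => by simp [map_smul, smul_mul_assoc])
    (fun x y y' => by simp [mul_add])
    (fun c x y => by simp [mul_smul_comm])) ∘ₗ comul

end HopfHelpers

section Sandwich

variable {K : Type} [Field K] {H : Type} [Ring H] [Algebra K H]

/-- Since `ad(h) w = sandwich anti (Δ h) w`, the rule `ad(h k) = ad(k) ∘ ad(h)` reduces to the
multiplicativity of `Δ` and the antimultiplicativity of `anti`. -/
noncomputable def sandwich (anti : H →ₗ[K] H) : H ⊗[K] H →ₗ[K] Module.End K H :=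
  TensorProduct.lift (LinearMap.mk₂ K
    (fun x y => LinearMap.mulRight K y ∘ₗ LinearMap.mulLeft K (anti x))
    (fun x x' y => by ext w; simp [add_mul])
    (fun c x y => by ext w; simp)
    (fun x y y' => by ext w; simp [mul_add])
    (fun c x y => by ext w; simp))

theorem sandwich_tmul (anti : H →ₗ[K] H) (x y w : H) :
    sandwich anti (x ⊗ₜ[K] y) w = anti x * w * y := by
  simp [sandwich]

theorem adAct_apply_eq_sandwich (comul : H →ₗ[K] H ⊗[K] H) (anti : H →ₗ[K] H) (w h : H) :
    adAct K H comul anti w h = sandwich anti (comul h) w := by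
  simp only [adAct, LinearMap.comp_apply]
  induction comul h using TensorProduct.induction_on with
  | zero => simp
  | tmul x y => simp [sandwich_tmul]
  | add s t hs ht => simp [map_add, hs, ht]

theorem sandwich_one {anti : H →ₗ[K] H} (hanti : anti 1 = 1) (w : H) :
    sandwich anti 1 w = w := by
  rw [Algebra.TensorProduct.one_def, sandwich_tmul, hanti, one_mul, mul_one]

theorem sandwich_mul {anti : H →ₗ[K] H} (hanti : ∀ x y, anti (x * y) = anti y * anti x)
    (s t : H ⊗[K] H) (w : H) :
    sandwich anti (s * t) w = sandwich anti t (sandwich anti s w) := by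
  induction s using TensorProduct.induction_on with
  | zero => simp
  | add s s' hs hs' => simp only [add_mul, map_add, LinearMap.add_apply, hs, hs']
  | tmul x y =>
    induction t using TensorProduct.induction_on with
    | zero => simp
    | add t t' ht ht' => simp only [mul_add, map_add, LinearMap.add_apply, ht, ht']
    | tmul a b =>
      simp only [Algebra.TensorProduct.tmul_mul_tmul, sandwich_tmul, hanti, mul_assoc]

theorem adAct_one {comul : H →ₐ[K] H ⊗[K] H} {anti : H →ₗ[K] H} (hanti : anti 1 = 1) (w : H) :
    adAct K H comul.toLinearMap anti w 1 = w := by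
  rw [adAct_apply_eq_sandwich, AlgHom.toLinearMap_apply, map_one, sandwich_one hanti]

theorem adAct_mul {comul : H →ₐ[K] H ⊗[K] H} {anti : H →ₗ[K] H}
    (hanti : ∀ x y, anti (x * y) = anti y * anti x) (w h k : H) :
    adAct K H comul.toLinearMap anti w (h * k)
      = adAct K H comul.toLinearMap anti (adAct K H comul.toLinearMap anti w h) k := by
  simp only [adAct_apply_eq_sandwich, AlgHom.toLinearMap_apply, map_mul, sandwich_mul hanti]

end Sandwich

namespace UniversalEnvelopingAlgebra

variable {K : Type} [Field K] {g : Type} [LieRing g] [LieAlgebra K g]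

local notation "𝔘" => UniversalEnvelopingAlgebra K g

local notation "ad[" w "]" => adAct K 𝔘 (AlgHom.toLinearMap (comulU K g)) (antiU K g) w

theorem induction_on {C : 𝔘 → Prop} (a : 𝔘)
    (algebraMap : ∀ r : K, C (algebraMap K 𝔘 r)) (ι : ∀ X : g, C (ι K X))
    (mul : ∀ a b, C a → C b → C (a * b)) (add : ∀ a b, C a → C b → C (a + b)) : C a := by
  obtain ⟨t, rfl⟩ := RingCon.mkₐ_surjective (α := K) (ringCon K g) a
  induction t using TensorAlgebra.induction with
  | algebraMap r => rw [AlgHom.commutes]; exact algebraMap r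
  | ι X => exact ι X
  | mul a b ha hb => rw [map_mul]; exact mul _ _ ha hb
  | add a b ha hb => rw [map_add]; exact add _ _ ha hb

theorem comulU_ι (X : g) : comulU K g (ι K X) = ι K X ⊗ₜ[K] 1 + 1 ⊗ₜ[K] ι K X := by
  simp [comulU, comulUgen]

theorem antiU_ι (X : g) : antiU K g (ι K X) = -ι K X := by
  simp [antiU, antiUgen]

theorem antiU_one : antiU K g 1 = 1 := by
  simp [antiU]

theorem antiU_mul (x y : 𝔘) : antiU K g (x * y) = antiU K g y * antiU K g x := by
  simp [antiU]

theorem adAct_ι_ι (X Y : g) : ad[ι K X] (ι K Y) = ι K ⁅X, Y⁆ := by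
  rw [adAct_apply_eq_sandwich, AlgHom.toLinearMap_apply, comulU_ι, map_add,
    LinearMap.add_apply, sandwich_tmul, sandwich_tmul, antiU_ι, antiU_one, LieHom.map_lie,
    Ring.lie_def]
  simp only [one_mul, mul_one, neg_mul]
  abel

theorem adAct_mem_range_ι (h : 𝔘) {w : 𝔘} (hw : w ∈ LinearMap.range (ι K (L := g)).toLinearMap) :
    ad[w] h ∈ LinearMap.range (ι K (L := g)).toLinearMap := by
  induction h using induction_on generalizing w with
  | algebraMap r =>
    rw [Algebra.algebraMap_eq_smul_one, map_smul, adAct_one antiU_one]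
    exact Submodule.smul_mem _ r hw
  | ι Y =>
    obtain ⟨X, rfl⟩ := hw
    exact ⟨⁅X, Y⁆, (adAct_ι_ι X Y).symm⟩
  | mul a b ha hb => rw [adAct_mul antiU_mul]; exact hb (ha hw)
  | add a b ha hb => rw [map_add]; exact Submodule.add_mem _ (ha hw) (hb hw)

section Operation

variable {E : Type} [Ring E] [Algebra K E] (L : UniversalEnvelopingAlgebra K g →ₐ[K] E)
    (I : UniversalEnvelopingAlgebra K g →ₗ[K] E)

/-- The right-hand side `Σ L_{h⁽¹⁾} I_{ad(h⁽²⁾) X}` of the formula, as a function of `Δ h`. -/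
noncomputable def cartanSum (X : g) : 𝔘 ⊗[K] 𝔘 →ₗ[K] E :=
  TensorProduct.lift ((LinearMap.mul K E).compl₁₂ L.toLinearMap (I ∘ₗ ad[ι K X]))

theorem cartanSum_tmul (X : g) (x y : 𝔘) :
    cartanSum L I X (x ⊗ₜ[K] y) = L x * I (ad[ι K X] y) := by
  simp [cartanSum]

variable {L I}

theorem mul_cartanSum {X Y : g} {y : 𝔘} (hY : ad[ι K X] y = ι K Y) (x : 𝔘) (t : 𝔘 ⊗[K] 𝔘) :
    L x * cartanSum L I Y t = cartanSum L I X (x ⊗ₜ[K] y * t) := by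
  induction t using TensorProduct.induction_on with
  | zero => simp
  | add t t' ht ht' => rw [mul_add, map_add, mul_add, map_add, ht, ht']
  | tmul a b =>
    rw [Algebra.TensorProduct.tmul_mul_tmul, cartanSum_tmul, cartanSum_tmul, map_mul,
      adAct_mul antiU_mul, hY, mul_assoc]

theorem cartanSum_mul_comulU {k : 𝔘}
    (hk : ∀ Y : g, I (ι K Y) * L k = cartanSum L I Y (comulU K g k)) (X : g)
    (s : 𝔘 ⊗[K] 𝔘) : cartanSum L I X s * L k = cartanSum L I X (s * comulU K g k) := by
  induction s using TensorProduct.induction_on with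
  | zero => simp
  | add s s' hs hs' => rw [map_add, add_mul, hs, hs', add_mul, map_add]
  | tmul x y =>
    -- `ad(y) X ∈ g`, so the hypothesis on `k` applies to `I_{ad(y) X} L_k`.
    obtain ⟨Y, hY⟩ := adAct_mem_range_ι y (w := ι K X) ⟨X, rfl⟩
    replace hY : ad[ι K X] y = ι K Y := hY.symm
    rw [cartanSum_tmul, hY, mul_assoc, hk Y, mul_cartanSum hY]

theorem ι_mul_eq_cartanSum_comulU
    (hcartan : ∀ X Y : g, I (ι K X) * L (ι K Y) - L (ι K Y) * I (ι K X) = I (ι K ⁅X, Y⁆))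
    (h : 𝔘) (X : g) : I (ι K X) * L h = cartanSum L I X (comulU K g h) := by
  induction h using induction_on generalizing X with
  | algebraMap r =>
    rw [AlgHom.commutes, AlgHom.commutes, Algebra.algebraMap_eq_smul_one,
      Algebra.algebraMap_eq_smul_one, map_smul, Algebra.TensorProduct.one_def, cartanSum_tmul,
      adAct_one antiU_one, map_one, one_mul, mul_smul_comm, mul_one]
  | ι Y =>
    rw [comulU_ι, map_add, cartanSum_tmul, cartanSum_tmul, adAct_one antiU_one, adAct_ι_ι,
      map_one, one_mul, ← hcartan X Y]
    abel
  | mul h k ihh ihk =>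
    rw [map_mul, map_mul, ← mul_assoc, ihh X, cartanSum_mul_comulU ihk]
  | add h k ihh ihk =>
    rw [map_add, map_add, mul_add, map_add, ihh X, ihk X]

end Operation

end UniversalEnvelopingAlgebra

theorem stmt3_general (K : Type) [Field K] (g : Type) [LieRing g] [LieAlgebra K g]
    (Ω : Type) [Ring Ω] [Algebra K Ω] (𝒜 : ℕ → Submodule K Ω)
    (d : Ω →ₗ[K] Ω)
    (i : g →ₗ[K] Module.End K Ω) (hi : IsLieOperation K g Ω 𝒜 d i)
    -- the canonical extension of `L` to `U(g)`:
    (Lext : UniversalEnvelopingAlgebra K g →ₐ[K] Module.End K Ω)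
    (hLext : ∀ X : g, Lext (UniversalEnvelopingAlgebra.ι K X)
      = (d : Module.End K Ω) * i X + i X * (d : Module.End K Ω))
    -- a linear extension of `i` to `U(g)`:
    (iU : UniversalEnvelopingAlgebra K g →ₗ[K] Module.End K Ω)
    (hiU : ∀ Y : g, iU (UniversalEnvelopingAlgebra.ι K Y) = i Y) :
    (∀ (X : g) (h : UniversalEnvelopingAlgebra K g),
      adAct K (UniversalEnvelopingAlgebra K g) (comulU K g).toLinearMap (antiU K g)
          ((UniversalEnvelopingAlgebra.ι K X : UniversalEnvelopingAlgebra K g)) h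
        ∈ LinearMap.range (UniversalEnvelopingAlgebra.ι K (L := g)).toLinearMap) ∧
    (∀ (X : g) (h : UniversalEnvelopingAlgebra K g),
      i X * Lext h = TensorProduct.lift
        ((LinearMap.mul K (Module.End K Ω)).compl₁₂ Lext.toLinearMap
          (iU ∘ₗ adAct K (UniversalEnvelopingAlgebra K g) (comulU K g).toLinearMap
            (antiU K g) (UniversalEnvelopingAlgebra.ι K X)))
        (comulU K g h)) := by
  refine ⟨fun X h => UniversalEnvelopingAlgebra.adAct_mem_range_ι h ⟨X, rfl⟩, fun X h => ?_⟩
  rw [← hiU]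
  refine UniversalEnvelopingAlgebra.ι_mul_eq_cartanSum_comulU (fun X' Y => ?_) h X
  simpa only [hiU, hLext] using hi.cartan X' Y

/-- Let `Ω` be a graded differential algebra carrying an operation of a
finite-dimensional Lie algebra `g` and let `Lext` be the canonical extension of `L` to
`U(g)`.  Then for every `X ∈ g` and `h ∈ U(g)`,
`i_X ∘ L_h = Σⱼ L_{h⁽¹⁾ⱼ} ∘ i_{ad(h⁽²⁾ⱼ)X}`, where `ad` is the right adjoint action of
`U(g)` on itself (`ad(h)g = Σⱼ S(h⁽¹⁾ⱼ) g h⁽²⁾ⱼ`); in particular `ad(h)X ∈ g` for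
`X ∈ g` (first conjunct), so the right-hand side is well defined: it is expressed via
`iU`, an arbitrary linear extension of `i` to `U(g)` (whose values on the image of `g`
are prescribed by `i`). -/
theorem stmt3 (K : Type) [Field K] (g : Type) [LieRing g] [LieAlgebra K g]
    [Module.Finite K g]
    (Ω : Type) [Ring Ω] [Algebra K Ω] (𝒜 : ℕ → Submodule K Ω) [GradedAlgebra 𝒜]
    (d : Ω →ₗ[K] Ω) (hΩ : IsGDA K Ω 𝒜 d)
    (i : g →ₗ[K] Module.End K Ω) (hi : IsLieOperation K g Ω 𝒜 d i)
    -- the canonical extension of `L` to `U(g)`: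
    (Lext : UniversalEnvelopingAlgebra K g →ₐ[K] Module.End K Ω)
    (hLext : ∀ X : g, Lext (UniversalEnvelopingAlgebra.ι K X)
      = (d : Module.End K Ω) * i X + i X * (d : Module.End K Ω))
    -- a linear extension of `i` to `U(g)`:
    (iU : UniversalEnvelopingAlgebra K g →ₗ[K] Module.End K Ω)
    (hiU : ∀ Y : g, iU (UniversalEnvelopingAlgebra.ι K Y) = i Y) :
    (∀ (X : g) (h : UniversalEnvelopingAlgebra K g),
      adAct K (UniversalEnvelopingAlgebra K g) (comulU K g).toLinearMap (antiU K g)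
          ((UniversalEnvelopingAlgebra.ι K X : UniversalEnvelopingAlgebra K g)) h
        ∈ LinearMap.range (UniversalEnvelopingAlgebra.ι K (L := g)).toLinearMap) ∧
    (∀ (X : g) (h : UniversalEnvelopingAlgebra K g),
      i X * Lext h = TensorProduct.lift
        ((LinearMap.mul K (Module.End K Ω)).compl₁₂ Lext.toLinearMap
          (iU ∘ₗ adAct K (UniversalEnvelopingAlgebra K g) (comulU K g).toLinearMap
            (antiU K g) (UniversalEnvelopingAlgebra.ι K X)))
        (comulU K g h)) :=
  stmt3_general K g Ω 𝒜 d i hi Lext hLext iU hiU
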